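/- arXiv:2103.16300 — 6 statements merged into one kernel-verified Lean document; each statement's English description precedes it below -/
import Mathlib

section
/- Let K be a field, let A be a d × n integer matrix, and let b_1, ..., b_m ∈ ℤ^n satisfy A b_i = 0 for all i. Write each b_i = b_i^+ − b_i^− with b_i^+, b_i^− ∈ ℕ^n having disjoint supports. Then the following are equivalent: (1) b_1, ..., b_m form a Markov basis for A, i.e., for any u, v ∈ ℕ^n with A u = A v there is a finite sequence u = w_0, w_1, ..., w_N = v with every w_j ∈ ℕ^n and every difference w_{j+1} − w_j equal to b_i or −b_i for some i; (2) the binomials p^{b_i^+} − p^{b_i^−}, for 1 ≤ i ≤ m, generate the toric ideal I_A in the polynomial ring K[p_1, ..., p_n]. -/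
/-!
Two exponent vectors `x, y` connected by a move `± b i` satisfy
`p^x - p^y = ± p^a (p^(b i)⁺ - p^(b i)⁻)` for some `a`, so telescoping along a path of moves
puts every generator `p^u - p^v` of `I_A` into the ideal of the move binomials. Conversely, fix
`u` and let `S` be the set of exponents reachable from `u`. The linear functional summing the
coefficients of the monomials `p^e` with `e ∈ S` kills every multiple of a move binomial,
because `S` is closed under the exchanges `(b i)⁺ ↔ (b i)⁻`. If `p^u - p^v` lies in the ideal
of the move binomials, the functional vanishes on it, which forces `v ∈ S`.
-/

open MvPolynomial

namespace MarkovBasis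

section Paths

variable {α : Type*} {r : α → α → Prop}

theorem reflTransGen_of_seq (w : ℕ → α) (N : ℕ) (hw : ∀ j < N, r (w j) (w (j + 1))) :
    Relation.ReflTransGen r (w 0) (w N) := by
  induction N with
  | zero => exact .refl
  | succ N ih => exact (ih fun j hj => hw j (by omega)).tail (hw N N.lt_succ_self)

theorem exists_seq_of_reflTransGen {a c : α} (h : Relation.ReflTransGen r a c) :
    ∃ (N : ℕ) (w : ℕ → α), w 0 = a ∧ w N = c ∧ ∀ j < N, r (w j) (w (j + 1)) := by
  induction h with
  | refl => exact ⟨0, fun _ => a, rfl, rfl, by simp⟩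
  | @tail c d _ hcd ih =>
    obtain ⟨N, w, hw0, hwN, hw⟩ := ih
    refine ⟨N + 1, fun j => if j ≤ N then w j else d, by simpa using hw0, by simp, ?_⟩
    intro j hj
    rcases Nat.lt_or_ge j N with hjN | hjN
    · simpa [hjN.le, Nat.succ_le_of_lt hjN] using hw j hjN
    · obtain rfl : j = N := by omega
      simpa [hwN] using hcd

theorem exists_seq_iff_reflTransGen {a c : α} :
    (∃ (N : ℕ) (w : ℕ → α), w 0 = a ∧ w N = c ∧ ∀ j < N, r (w j) (w (j + 1))) ↔
      Relation.ReflTransGen r a c :=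
  ⟨fun ⟨N, w, hw0, hwN, hw⟩ => hw0 ▸ hwN ▸ reflTransGen_of_seq w N hw,
    exists_seq_of_reflTransGen⟩

end Paths

variable {σ R ι : Type*} [CommRing R]

def IsMove (b : ι → σ → ℤ) (x y : σ → ℕ) : Prop :=
  ∃ i, (fun l => (y l : ℤ) - x l) = b i ∨ (fun l => (y l : ℤ) - x l) = -b i

theorem IsMove.symm {b : ι → σ → ℤ} {x y : σ → ℕ} (h : IsMove b x y) : IsMove b y x := by
  obtain ⟨i, h | h⟩ := h <;> refine ⟨i, ?_⟩
  · right; rw [← h]; ext l; simp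
  · left; rw [← neg_neg (b i), ← h]; ext l; simp

theorem isMove_add_toNat_add_neg_toNat (b : ι → σ → ℤ) (i : ι) (e : σ → ℕ) :
    IsMove b (e + fun l => (b i l).toNat) (e + fun l => (-b i l).toNat) :=
  ⟨i, .inr <| by ext l; simp only [Pi.add_apply, Pi.neg_apply]; push_cast; omega⟩

variable [Fintype σ]

theorem prod_X_pow_add (u v : σ → ℕ) :
    (∏ l, X l ^ (u + v) l : MvPolynomial σ R) = (∏ l, X l ^ u l) * ∏ l, X l ^ v l := by
  simp only [Pi.add_apply, pow_add, Finset.prod_mul_distrib]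

variable (R) in
noncomputable def moveIdeal (b : ι → σ → ℤ) : Ideal (MvPolynomial σ R) :=
  Ideal.span (Set.range fun i =>
    (∏ l, X l ^ (b i l).toNat : MvPolynomial σ R) - ∏ l, X l ^ (-b i l).toNat)

theorem prod_X_pow_sub_mem_moveIdeal_of_sub_eq {b : ι → σ → ℤ} {x y : σ → ℕ} {i : ι}
    (h : (fun l => (y l : ℤ) - x l) = b i) :
    (∏ l, X l ^ x l : MvPolynomial σ R) - ∏ l, X l ^ y l ∈ moveIdeal R b := by
  set a : σ → ℕ := fun l => x l - (-b i l).toNat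
  have hx : x = a + fun l => (-b i l).toNat := by
    ext l; have := congrFun h l; simp only [a, Pi.add_apply]; omega
  have hy : y = a + fun l => (b i l).toNat := by
    ext l; have := congrFun h l; simp only [a, Pi.add_apply]; omega
  have hgen : (∏ l, X l ^ (b i l).toNat : MvPolynomial σ R) - ∏ l, X l ^ (-b i l).toNat ∈
      moveIdeal R b := Ideal.subset_span ⟨i, rfl⟩
  rw [hx, hy, prod_X_pow_add, prod_X_pow_add, ← neg_sub, ← mul_sub]
  exact neg_mem (Ideal.mul_mem_left _ _ hgen)

theorem prod_X_pow_sub_mem_moveIdeal_of_isMove {b : ι → σ → ℤ} {x y : σ → ℕ}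
    (h : IsMove b x y) :
    (∏ l, X l ^ x l : MvPolynomial σ R) - ∏ l, X l ^ y l ∈ moveIdeal R b := by
  obtain ⟨i, h | h⟩ := h
  · exact prod_X_pow_sub_mem_moveIdeal_of_sub_eq h
  · rw [← neg_sub]
    refine neg_mem (prod_X_pow_sub_mem_moveIdeal_of_sub_eq (i := i) ?_)
    rw [← neg_neg (b i), ← h]; ext l; simp

theorem prod_X_pow_sub_mem_moveIdeal_of_reflTransGen {b : ι → σ → ℤ} {x y : σ → ℕ}
    (h : Relation.ReflTransGen (IsMove b) x y) :
    (∏ l, X l ^ x l : MvPolynomial σ R) - ∏ l, X l ^ y l ∈ moveIdeal R b := by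
  induction h with
  | refl => simp
  | @tail y z _ hyz ih =>
    rw [← sub_add_sub_cancel _ (∏ l, X l ^ y l)]
    exact add_mem ih (prod_X_pow_sub_mem_moveIdeal_of_isMove hyz)

variable (σ R) in
noncomputable def monomialBasis : Module.Basis (σ → ℕ) R (MvPolynomial σ R) :=
  (basisMonomials σ R).reindex Finsupp.equivFunOnFinite

theorem monomialBasis_apply (u : σ → ℕ) :
    monomialBasis σ R u = ∏ l, X l ^ u l := by
  simp only [monomialBasis, Module.Basis.reindex_apply, coe_basisMonomials]
  rw [monomial_eq, C_1, one_mul, Finsupp.prod_fintype _ _ fun _ => pow_zero _]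
  rfl

noncomputable def sumCoeffsOn (S : Set (σ → ℕ)) : MvPolynomial σ R →ₗ[R] R :=
  (monomialBasis σ R).constr R (S.indicator 1)

theorem sumCoeffsOn_prod_X_pow (S : Set (σ → ℕ)) (u : σ → ℕ) :
    sumCoeffsOn S (∏ l, X l ^ u l : MvPolynomial σ R) = S.indicator 1 u := by
  rw [sumCoeffsOn, ← monomialBasis_apply, Module.Basis.constr_basis]

theorem sumCoeffsOn_mul_prod_X_pow_sub {S : Set (σ → ℕ)} {s t : σ → ℕ}
    (hS : ∀ e, e + s ∈ S ↔ e + t ∈ S) (a : MvPolynomial σ R) :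
    sumCoeffsOn S (a * ((∏ l, X l ^ s l) - ∏ l, X l ^ t l)) = 0 := by
  suffices sumCoeffsOn S ∘ₗ LinearMap.mulRight R (∏ l, X l ^ s l) =
      sumCoeffsOn S ∘ₗ LinearMap.mulRight R (∏ l, X l ^ t l) by
    simpa [mul_sub, sub_eq_zero] using LinearMap.congr_fun this a
  refine (monomialBasis σ R).ext fun e => ?_
  simp only [LinearMap.comp_apply, LinearMap.mulRight_apply, monomialBasis_apply,
    ← prod_X_pow_add, sumCoeffsOn_prod_X_pow]
  by_cases he : e + s ∈ S
  · rw [Set.indicator_of_mem he, Set.indicator_of_mem ((hS e).mp he)]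
    rfl
  · rw [Set.indicator_of_notMem he, Set.indicator_of_notMem (mt (hS e).mpr he)]

/-- `sumCoeffsOn S` vanishes on the ideal but takes the value `1 - 1_S(y)` on `p^x - p^y`. -/
theorem mem_of_prod_X_pow_sub_mem_span [Nontrivial R] {S : Set (σ → ℕ)} {s t : ι → σ → ℕ}
    (hS : ∀ i e, e + s i ∈ S ↔ e + t i ∈ S) {x y : σ → ℕ}
    (hxy : (∏ l, X l ^ x l : MvPolynomial σ R) - ∏ l, X l ^ y l ∈
      Ideal.span (Set.range fun i => (∏ l, X l ^ s i l) - ∏ l, X l ^ t i l))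
    (hx : x ∈ S) : y ∈ S := by
  obtain ⟨c, hc⟩ := Finsupp.mem_span_range_iff_exists_finsupp.mp hxy
  have hvanish : sumCoeffsOn S ((∏ l, X l ^ x l : MvPolynomial σ R) - ∏ l, X l ^ y l) = 0 := by
    rw [← hc, map_finsuppSum]
    exact Finset.sum_eq_zero fun i _ => sumCoeffsOn_mul_prod_X_pow_sub (hS i) (c i)
  rw [map_sub, sumCoeffsOn_prod_X_pow, sumCoeffsOn_prod_X_pow, Set.indicator_of_mem hx] at hvanish
  by_contra hy
  rw [Set.indicator_of_notMem hy] at hvanish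
  simp at hvanish

variable {κ : Type*}

variable (R) in
noncomputable def toricIdeal (A : Matrix κ σ ℤ) : Ideal (MvPolynomial σ R) :=
  Ideal.span {f | ∃ u v : σ → ℕ, A.mulVec (fun j => (u j : ℤ)) = A.mulVec (fun j => (v j : ℤ)) ∧
    f = ∏ l, X l ^ u l - ∏ l, X l ^ v l}

theorem moveIdeal_le_toricIdeal {A : Matrix κ σ ℤ} {b : ι → σ → ℤ} (hb : ∀ i, A.mulVec (b i) = 0) :
    moveIdeal R b ≤ toricIdeal R A := by
  refine Ideal.span_le.mpr ?_
  rintro _ ⟨i, rfl⟩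
  refine Ideal.subset_span ⟨_, _, ?_, rfl⟩
  have hsplit : (fun l => ((b i l).toNat : ℤ)) - (fun l => ((-b i l).toNat : ℤ)) = b i := by
    ext l; simp only [Pi.sub_apply]; omega
  rw [← sub_eq_zero, ← Matrix.mulVec_sub, hsplit, hb i]

theorem toricIdeal_le_moveIdeal {A : Matrix κ σ ℤ} {b : ι → σ → ℤ}
    (h : ∀ u v : σ → ℕ, A.mulVec (fun j => (u j : ℤ)) = A.mulVec (fun j => (v j : ℤ)) →
      Relation.ReflTransGen (IsMove b) u v) :
    toricIdeal R A ≤ moveIdeal R b := by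
  refine Ideal.span_le.mpr ?_
  rintro _ ⟨u, v, huv, rfl⟩
  exact prod_X_pow_sub_mem_moveIdeal_of_reflTransGen (h u v huv)

theorem reflTransGen_of_toricIdeal_le_moveIdeal [Nontrivial R] {A : Matrix κ σ ℤ}
    {b : ι → σ → ℤ} (h : toricIdeal R A ≤ moveIdeal R b) {u v : σ → ℕ}
    (huv : A.mulVec (fun j => (u j : ℤ)) = A.mulVec (fun j => (v j : ℤ))) :
    Relation.ReflTransGen (IsMove b) u v := by
  have hmem : (∏ l, X l ^ u l : MvPolynomial σ R) - ∏ l, X l ^ v l ∈ moveIdeal R b :=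
    h (Ideal.subset_span ⟨u, v, huv, rfl⟩)
  refine mem_of_prod_X_pow_sub_mem_span (S := {w | Relation.ReflTransGen (IsMove b) u w})
    (fun i e => ⟨fun hs => hs.tail (isMove_add_toNat_add_neg_toNat b i e),
      fun ht => ht.tail (isMove_add_toNat_add_neg_toNat b i e).symm⟩) hmem .refl

end MarkovBasis

open MarkovBasis

/-- **Diaconis–Sturmfels / fundamental theorem of Markov bases.**
Integer vectors `b_1, …, b_m` in the kernel of `A` form a Markov basis
(connecting any two nonnegative integer vectors with the same sufficient
statistics `A u = A v` by moves `± b_i` staying in `ℕⁿ`) if and only if the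
binomials `p^{b_i⁺} - p^{b_i⁻}` generate the toric ideal `I_A` of `A`. -/
theorem markov_basis_iff_binomials_generate_toric_ideal
    (K : Type*) [Field K] (d n m : ℕ)
    (A : Matrix (Fin d) (Fin n) ℤ)
    (b : Fin m → (Fin n → ℤ))
    (hb : ∀ i, A.mulVec (b i) = 0) :
    (∀ u v : Fin n → ℕ,
        A.mulVec (fun j => (u j : ℤ)) = A.mulVec (fun j => (v j : ℤ)) →
        ∃ (N : ℕ) (w : ℕ → Fin n → ℕ), w 0 = u ∧ w N = v ∧
          ∀ j < N, ∃ i : Fin m,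
            (fun l => ((w (j + 1) l : ℤ) - (w j l : ℤ))) = b i ∨
            (fun l => ((w (j + 1) l : ℤ) - (w j l : ℤ))) = -(b i))
    ↔
    Ideal.span (Set.range fun i : Fin m =>
        (∏ l, X l ^ (b i l).toNat : MvPolynomial (Fin n) K)
          - ∏ l, X l ^ (-(b i l)).toNat)
      = Ideal.span {f : MvPolynomial (Fin n) K | ∃ u v : Fin n → ℕ,
          A.mulVec (fun j => (u j : ℤ)) = A.mulVec (fun j => (v j : ℤ)) ∧
          f = ∏ l, X l ^ u l - ∏ l, X l ^ v l} := by
  change (∀ u v : Fin n → ℕ, _ → ∃ (N : ℕ) (w : ℕ → Fin n → ℕ), w 0 = u ∧ w N = v ∧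
    ∀ j < N, IsMove b (w j) (w (j + 1))) ↔ moveIdeal K b = toricIdeal K A
  simp only [exists_seq_iff_reflTransGen]
  exact ⟨fun h => le_antisymm (moveIdeal_le_toricIdeal hb) (toricIdeal_le_moveIdeal h),
    fun h _ _ => reflTransGen_of_toricIdeal_le_moveIdeal h.ge⟩
end

section
/- Let (p_0, p_1, p_2) ∈ ℝ³ with p_0, p_1, p_2 > 0 and p_0 + p_1 + p_2 = 1. Then there exists x ∈ (0,1) with p_0 = x², p_1 = x(1−x), p_2 = 1−x if and only if p_0 p_2 + p_1 p_2 − p_1 = 0. Hence the staged tree model of the two-flip coin experiment is exactly the set of points of the open probability simplex Δ_2 on which this quadratic polynomial vanishes. -/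
/-- **Implicit description of the staged tree model of the two-flip coin.**
A point `(p₀, p₁, p₂)` of the open probability simplex `Δ₂` lies on the curve
parametrized by `x ↦ (x², x(1-x), 1-x)`, `x ∈ (0,1)`, if and only if the
quadratic polynomial `p₀p₂ + p₁p₂ - p₁` vanishes at it. -/
theorem staged_tree_model_iff_quadric
    (p0 p1 p2 : ℝ) (h0 : 0 < p0) (h1 : 0 < p1) (h2 : 0 < p2)
    (hsum : p0 + p1 + p2 = 1) :
    (∃ x ∈ Set.Ioo (0 : ℝ) 1, p0 = x ^ 2 ∧ p1 = x * (1 - x) ∧ p2 = 1 - x)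
    ↔ p0 * p2 + p1 * p2 - p1 = 0 := by
  constructor
  · rintro ⟨x, ⟨hx0, hx1⟩, rfl, rfl, rfl⟩
    ring
  · intro hq
    refine ⟨1 - p2, ⟨by linarith, by linarith⟩, ?_, ?_, by ring⟩
    · nlinarith [sq_nonneg (1 - p2)]
    · nlinarith
end

section
/- Let g ≥ 1 and let R be a g × g complex symmetric matrix whose real part (the g × g real matrix of entrywise real parts) is negative definite. Then for every z ∈ ℂ^g the theta series Σ_{n ∈ ℤ^g} exp(nᵀ R n + nᵀ z) converges absolutely; i.e., the family n ↦ exp(nᵀ R n + nᵀ z), indexed by n ∈ ℤ^g, is summable. -/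
/-!
The real part of the exponent is `-(xᵀ M x) + ∑ᵢ xᵢ Re zᵢ` with `x = n` and `M = -Re R`.
By compactness of the unit sphere, `xᵀ M x ≥ c ∑ᵢ xᵢ²` for some `c > 0`, so the terms are
dominated by `∏ᵢ exp (|Re zᵢ| |nᵢ| - c nᵢ²)`, a product of summable one-dimensional
Gaussian series.
-/

open Real Finset Matrix

theorem summable_fin_prod_of_nonneg {κ : Type*} {n : ℕ} {f : Fin n → κ → ℝ}
    (hf₀ : ∀ i k, 0 ≤ f i k) (hf : ∀ i, Summable (f i)) :
    Summable fun x : Fin n → κ => ∏ i, f i (x i) := by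
  induction n with
  | zero => exact Summable.of_finite
  | succ m ih =>
    have hprod := (hf 0).mul_of_nonneg
      (ih (f := fun i => f i.succ) (fun _ => hf₀ _) fun _ => hf _)
      (hf₀ 0) fun _ => prod_nonneg fun _ _ => hf₀ _ _
    exact ((Fin.consEquiv fun _ => κ).symm.summable_iff.mpr hprod).congr fun x =>
      (Fin.prod_univ_succ fun i => f i (x i)).symm

theorem summable_pi_prod_of_nonneg {ι κ : Type*} [Fintype ι] {f : ι → κ → ℝ}
    (hf₀ : ∀ i k, 0 ≤ f i k) (hf : ∀ i, Summable (f i)) :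
    Summable fun x : ι → κ => ∏ i, f i (x i) := by
  let e := Fintype.equivFin ι
  refine (e.arrowCongr (Equiv.refl κ)).symm.summable_iff.mp ?_
  refine (summable_fin_prod_of_nonneg (f := fun j => f (e.symm j)) (fun _ => hf₀ _)
    fun _ => hf _).congr fun x => ?_
  simpa [Equiv.arrowCongr_apply] using e.symm.prod_comp fun i => f i (x (e i))

theorem summable_exp_mul_abs_sub_mul_sq (B : ℝ) {c : ℝ} (hc : 0 < c) :
    Summable fun k : ℤ => exp (B * |(k : ℝ)| - c * (k : ℝ) ^ 2) := by
  refine (summable_pow_mul_jacobiTheta₂_term_bound (B / (2 * π)) (div_pos hc pi_pos) 0).congr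
    fun k => ?_
  have hπ : π ≠ 0 := pi_ne_zero
  rw [pow_zero, one_mul, Int.cast_abs]
  congr 1
  field_simp
  ring

theorem exists_pos_mul_norm_sq_le {E : Type*} [NormedAddCommGroup E] [NormedSpace ℝ E]
    [FiniteDimensional ℝ E] {f : E → ℝ} (hf : Continuous f) (hpos : ∀ x ≠ 0, 0 < f x)
    (hsmul : ∀ (a : ℝ) x, f (a • x) = a ^ 2 * f x) :
    ∃ c > 0, ∀ x, c * ‖x‖ ^ 2 ≤ f x := by
  have hf₀ : f 0 = 0 := by simpa using hsmul 0 0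
  rcases subsingleton_or_nontrivial E with hE | hE
  · exact ⟨1, one_pos, fun x => by simp [Subsingleton.elim x 0, hf₀]⟩
  obtain ⟨u, hu, hmin⟩ := (isCompact_sphere (0 : E) 1).exists_isMinOn
    (NormedSpace.sphere_nonempty.mpr zero_le_one) hf.continuousOn
  have hu₀ : u ≠ 0 := ne_zero_of_mem_unit_sphere ⟨u, hu⟩
  refine ⟨f u, hpos u hu₀, fun x => ?_⟩
  rcases eq_or_ne x 0 with rfl | hx
  · simp [hf₀]
  have hxn : ‖x‖ ≠ 0 := norm_ne_zero_iff.mpr hx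
  have hsphere : ‖x‖⁻¹ • x ∈ Metric.sphere (0 : E) 1 := by
    simp [norm_smul, hxn]
  calc f u * ‖x‖ ^ 2 ≤ f (‖x‖⁻¹ • x) * ‖x‖ ^ 2 := by gcongr; exact hmin hsphere
    _ = f x := by rw [hsmul]; field_simp

theorem Matrix.PosDef.exists_pos_mul_sum_sq_le {ι : Type*} [Fintype ι] {M : Matrix ι ι ℝ}
    (hM : M.PosDef) : ∃ c > 0, ∀ x : ι → ℝ, c * ∑ i, x i ^ 2 ≤ x ⬝ᵥ M *ᵥ x := by
  obtain ⟨c, hc, hle⟩ := exists_pos_mul_norm_sq_le (E := EuclideanSpace ℝ ι)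
    (f := fun x => x.ofLp ⬝ᵥ M *ᵥ x.ofLp) (by fun_prop)
    (fun x hx => by simpa using hM.dotProduct_mulVec_pos (x := x.ofLp) (by simpa using hx))
    (fun a x => by simp [mulVec_smul]; ring)
  refine ⟨c, hc, fun x => ?_⟩
  simpa [EuclideanSpace.norm_sq_eq] using hle (WithLp.toLp 2 x)

theorem Matrix.re_sum_sum_mul_add_sum_mul {ι : Type*} [Fintype ι] (R : Matrix ι ι ℂ)
    (z : ι → ℂ) (x : ι → ℝ) :
    ((∑ i, ∑ j, (x i : ℂ) * R i j * x j) + ∑ i, (x i : ℂ) * z i).re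
      = x ⬝ᵥ R.map Complex.re *ᵥ x + ∑ i, x i * (z i).re := by
  simp [dotProduct, mulVec, Complex.mul_re, mul_sum, mul_assoc]

theorem riemann_theta_series_summable_general
    (g : ℕ) (R : Matrix (Fin g) (Fin g) ℂ)
    (hneg : (-(R.map Complex.re)).PosDef)
    (z : Fin g → ℂ) :
    Summable (fun n : Fin g → ℤ =>
      Complex.exp ((∑ i, ∑ j, (n i : ℂ) * R i j * (n j : ℂ)) + ∑ i, (n i : ℂ) * z i)) := by
  obtain ⟨c, hc, hcoer⟩ := hneg.exists_pos_mul_sum_sq_le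
  refine Summable.of_norm_bounded (summable_pi_prod_of_nonneg (fun _ _ => (exp_pos _).le)
    fun i => summable_exp_mul_abs_sub_mul_sq |(z i).re| hc) fun n => ?_
  have hre := R.re_sum_sum_mul_add_sum_mul z fun i => (n i : ℝ)
  simp only [Complex.ofReal_intCast] at hre
  rw [Complex.norm_exp, hre, ← Real.exp_sum, Real.exp_le_exp, sum_sub_distrib, ← mul_sum]
  have hquad := hcoer fun i => (n i : ℝ)
  rw [neg_mulVec, dotProduct_neg] at hquad
  have hlin : ∑ i, (n i : ℝ) * (z i).re ≤ ∑ i, |(z i).re| * |(n i : ℝ)| :=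
    sum_le_sum fun i _ => by rw [mul_comm, ← abs_mul]; exact le_abs_self _
  linarith

/-- **Absolute convergence of the Riemann theta series.**
If `R` is a `g × g` complex symmetric matrix whose real part is negative
definite (i.e. `-Re R` is positive definite), then for every `z ∈ ℂ^g` the
family `n ↦ exp(nᵀ R n + nᵀ z)`, indexed by `n ∈ ℤ^g`, is summable. -/
theorem riemann_theta_series_summable
    (g : ℕ) (hg : 1 ≤ g) (R : Matrix (Fin g) (Fin g) ℂ)
    (hsymm : R.IsSymm)
    (hneg : (-(R.map Complex.re)).PosDef)
    (z : Fin g → ℂ) :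
    Summable (fun n : Fin g → ℤ =>
      Complex.exp ((∑ i, ∑ j, (n i : ℂ) * R i j * (n j : ℂ)) + ∑ i, (n i : ℂ) * z i)) :=
  riemann_theta_series_summable_general g R hneg z
end

section
/- Let τ : ℝ³ → ℝ be a smooth, nowhere-vanishing function of the variables (x, y, t), and let c, d ∈ ℝ. Suppose τ satisfies the Hirota bilinear equation at every point: (τ_{xxxx} τ − 4 τ_{xxx} τ_x + 3 τ_{xx}²) + 4(τ_x τ_t − τ τ_{xt}) + 6c(τ_{xx} τ − τ_x²) + 3(τ τ_{yy} − τ_y²) + 8 d τ² = 0. Then the function u(x,y,t) = 2 ∂²/∂x² (log τ(x,y,t)) + c satisfies the Kadomtsev–Petviashvili equation ∂/∂x (4 u_t − 6 u u_x − u_{xxx}) = 3 u_{yy} at every point. -/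
/-- Partial derivative in the first variable `x`. -/
noncomputable def px (f : ℝ → ℝ → ℝ → ℝ) : ℝ → ℝ → ℝ → ℝ :=
  fun x y t => deriv (fun s => f s y t) x

/-- Partial derivative in the second variable `y`. -/
noncomputable def py (f : ℝ → ℝ → ℝ → ℝ) : ℝ → ℝ → ℝ → ℝ :=
  fun x y t => deriv (fun s => f x s t) y

/-- Partial derivative in the third variable `t`. -/
noncomputable def pt (f : ℝ → ℝ → ℝ → ℝ) : ℝ → ℝ → ℝ → ℝ :=
  fun x y t => deriv (fun s => f x y s) t

/-- The function `u(x,y,t) = 2 ∂²/∂x² (log τ(x,y,t)) + c` associated to a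
tau function `τ` and a constant `c`. -/
noncomputable def uKP (τ : ℝ → ℝ → ℝ → ℝ) (c : ℝ) : ℝ → ℝ → ℝ → ℝ :=
  fun x y t => 2 * px (px (fun a b s => Real.log (τ a b s))) x y t + c

namespace KPaux

/-- Joint smoothness of a curried 3-variable function. -/
def Sm (f : ℝ → ℝ → ℝ → ℝ) : Prop :=
  ContDiff ℝ (⊤ : ℕ∞) (fun p : ℝ × ℝ × ℝ => f p.1 p.2.1 p.2.2)

/-- `log ∘ τ`. -/
noncomputable def WW (τ : ℝ → ℝ → ℝ → ℝ) : ℝ → ℝ → ℝ → ℝ :=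
  fun a b s => Real.log (τ a b s)

/-- `∂²ₓ log τ`. -/
noncomputable def VV (τ : ℝ → ℝ → ℝ → ℝ) : ℝ → ℝ → ℝ → ℝ :=
  px (px (WW τ))

variable {f g : ℝ → ℝ → ℝ → ℝ} {x y t : ℝ}

theorem sliceX (hf : Sm f) (y t : ℝ) : ContDiff ℝ (⊤ : ℕ∞) (fun s : ℝ => f s y t) :=
  hf.comp (contDiff_id.prodMk (contDiff_const (c := (y, t))))

theorem sliceY (hf : Sm f) (x t : ℝ) : ContDiff ℝ (⊤ : ℕ∞) (fun s : ℝ => f x s t) :=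
  hf.comp ((contDiff_const (c := x)).prodMk (contDiff_id.prodMk (contDiff_const (c := t))))

theorem sliceT (hf : Sm f) (x y : ℝ) : ContDiff ℝ (⊤ : ℕ∞) (fun s : ℝ => f x y s) :=
  hf.comp ((contDiff_const (c := x)).prodMk ((contDiff_const (c := y)).prodMk contDiff_id))

theorem diffX (hf : Sm f) : DifferentiableAt ℝ (fun s => f s y t) x :=
  ((sliceX hf y t).differentiable (by simp)).differentiableAt

theorem diffY (hf : Sm f) : DifferentiableAt ℝ (fun s => f x s t) y :=
  ((sliceY hf x t).differentiable (by simp)).differentiableAt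

theorem diffT (hf : Sm f) : DifferentiableAt ℝ (fun s => f x y s) t :=
  ((sliceT hf x y).differentiable (by simp)).differentiableAt

theorem pxHas (hf : Sm f) : HasDerivAt (fun s => f s y t) (px f x y t) x :=
  (diffX hf).hasDerivAt

theorem pyHas (hf : Sm f) : HasDerivAt (fun s => f x s t) (py f x y t) y :=
  (diffY hf).hasDerivAt

theorem ptHas (hf : Sm f) : HasDerivAt (fun s => f x y s) (pt f x y t) t :=
  (diffT hf).hasDerivAt

theorem px_eq (hf : Sm f) : px f x y t
    = fderiv ℝ (fun p : ℝ × ℝ × ℝ => f p.1 p.2.1 p.2.2) (x, y, t) (1, 0, 0) := by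
  have hF : HasFDerivAt (fun p : ℝ × ℝ × ℝ => f p.1 p.2.1 p.2.2)
      (fderiv ℝ (fun p : ℝ × ℝ × ℝ => f p.1 p.2.1 p.2.2) (x, y, t)) (x, y, t) :=
    (hf.differentiable (by simp) (x, y, t)).hasFDerivAt
  have hL : HasDerivAt (fun s : ℝ => ((s, y, t) : ℝ × ℝ × ℝ)) (1, 0, 0) x :=
    (hasDerivAt_id x).prodMk ((hasDerivAt_const x y).prodMk (hasDerivAt_const x t))
  exact (hF.comp_hasDerivAt x hL).deriv

theorem py_eq (hf : Sm f) : py f x y t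
    = fderiv ℝ (fun p : ℝ × ℝ × ℝ => f p.1 p.2.1 p.2.2) (x, y, t) (0, 1, 0) := by
  have hF : HasFDerivAt (fun p : ℝ × ℝ × ℝ => f p.1 p.2.1 p.2.2)
      (fderiv ℝ (fun p : ℝ × ℝ × ℝ => f p.1 p.2.1 p.2.2) (x, y, t)) (x, y, t) :=
    (hf.differentiable (by simp) (x, y, t)).hasFDerivAt
  have hL : HasDerivAt (fun s : ℝ => ((x, s, t) : ℝ × ℝ × ℝ)) (0, 1, 0) y :=
    (hasDerivAt_const y x).prodMk ((hasDerivAt_id y).prodMk (hasDerivAt_const y t))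
  exact (hF.comp_hasDerivAt y hL).deriv

theorem pt_eq (hf : Sm f) : pt f x y t
    = fderiv ℝ (fun p : ℝ × ℝ × ℝ => f p.1 p.2.1 p.2.2) (x, y, t) (0, 0, 1) := by
  have hF : HasFDerivAt (fun p : ℝ × ℝ × ℝ => f p.1 p.2.1 p.2.2)
      (fderiv ℝ (fun p : ℝ × ℝ × ℝ => f p.1 p.2.1 p.2.2) (x, y, t)) (x, y, t) :=
    (hf.differentiable (by simp) (x, y, t)).hasFDerivAt
  have hL : HasDerivAt (fun s : ℝ => ((x, y, s) : ℝ × ℝ × ℝ)) (0, 0, 1) t :=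
    (hasDerivAt_const t x).prodMk ((hasDerivAt_const t y).prodMk (hasDerivAt_id t))
  exact (hF.comp_hasDerivAt t hL).deriv

theorem Sm_px (hf : Sm f) : Sm (px f) := by
  have h : (fun p : ℝ × ℝ × ℝ => px f p.1 p.2.1 p.2.2)
      = fun p : ℝ × ℝ × ℝ => fderiv ℝ (fun q : ℝ × ℝ × ℝ => f q.1 q.2.1 q.2.2) p (1, 0, 0) := by
    funext p
    rw [px_eq hf]
  unfold Sm
  rw [h]
  exact (hf.fderiv_right (by simp)).clm_apply contDiff_const

theorem Sm_py (hf : Sm f) : Sm (py f) := by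
  have h : (fun p : ℝ × ℝ × ℝ => py f p.1 p.2.1 p.2.2)
      = fun p : ℝ × ℝ × ℝ => fderiv ℝ (fun q : ℝ × ℝ × ℝ => f q.1 q.2.1 q.2.2) p (0, 1, 0) := by
    funext p
    rw [py_eq hf]
  unfold Sm
  rw [h]
  exact (hf.fderiv_right (by simp)).clm_apply contDiff_const

theorem Sm_pt (hf : Sm f) : Sm (pt f) := by
  have h : (fun p : ℝ × ℝ × ℝ => pt f p.1 p.2.1 p.2.2)
      = fun p : ℝ × ℝ × ℝ => fderiv ℝ (fun q : ℝ × ℝ × ℝ => f q.1 q.2.1 q.2.2) p (0, 0, 1) := by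
    funext p
    rw [pt_eq hf]
  unfold Sm
  rw [h]
  exact (hf.fderiv_right (by simp)).clm_apply contDiff_const

theorem fderiv_swap (hf : Sm f) (q : ℝ × ℝ × ℝ) (v w : ℝ × ℝ × ℝ) :
    fderiv ℝ (fun p => fderiv ℝ (fun r : ℝ × ℝ × ℝ => f r.1 r.2.1 r.2.2) p v) q w
      = fderiv ℝ (fun p => fderiv ℝ (fun r : ℝ × ℝ × ℝ => f r.1 r.2.1 r.2.2) p w) q v := by
  set F := fun r : ℝ × ℝ × ℝ => f r.1 r.2.1 r.2.2 with hF
  have hd : DifferentiableAt ℝ (fderiv ℝ F) q :=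
    ((hf.fderiv_right (m := (⊤ : ℕ∞)) (by simp)).differentiable (by simp)).differentiableAt
  have h1 : fderiv ℝ (fun p => fderiv ℝ F p v) q
      = (fderiv ℝ F q).comp (fderiv ℝ (fun _ : ℝ × ℝ × ℝ => v) q)
        + (fderiv ℝ (fderiv ℝ F) q).flip v :=
    fderiv_clm_apply hd (differentiableAt_const v)
  have h2 : fderiv ℝ (fun p => fderiv ℝ F p w) q
      = (fderiv ℝ F q).comp (fderiv ℝ (fun _ : ℝ × ℝ × ℝ => w) q)
        + (fderiv ℝ (fderiv ℝ F) q).flip w :=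
    fderiv_clm_apply hd (differentiableAt_const w)
  have hsymm : IsSymmSndFDerivAt ℝ F q :=
    hf.contDiffAt.isSymmSndFDerivAt (by rw [minSmoothness_of_isRCLikeNormedField]; exact WithTop.coe_le_coe.mpr (le_top : (2 : ℕ∞) ≤ ⊤))
  simp only [h1, h2, fderiv_fun_const, ContinuousLinearMap.add_apply,
    ContinuousLinearMap.comp_apply, ContinuousLinearMap.flip_apply]
  simpa using hsymm w v

theorem comm_xy (hf : Sm f) : px (py f) x y t = py (px f) x y t := by
  rw [px_eq (Sm_py hf), py_eq (Sm_px hf)]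
  have h1 : (fun p : ℝ × ℝ × ℝ => py f p.1 p.2.1 p.2.2)
      = fun p => fderiv ℝ (fun r : ℝ × ℝ × ℝ => f r.1 r.2.1 r.2.2) p (0, 1, 0) := by
    funext p; rw [py_eq hf]
  have h2 : (fun p : ℝ × ℝ × ℝ => px f p.1 p.2.1 p.2.2)
      = fun p => fderiv ℝ (fun r : ℝ × ℝ × ℝ => f r.1 r.2.1 r.2.2) p (1, 0, 0) := by
    funext p; rw [px_eq hf]
  rw [h1, h2]
  exact fderiv_swap hf (x, y, t) (0, 1, 0) (1, 0, 0)

theorem comm_xt (hf : Sm f) : px (pt f) x y t = pt (px f) x y t := by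
  rw [px_eq (Sm_pt hf), pt_eq (Sm_px hf)]
  have h1 : (fun p : ℝ × ℝ × ℝ => pt f p.1 p.2.1 p.2.2)
      = fun p => fderiv ℝ (fun r : ℝ × ℝ × ℝ => f r.1 r.2.1 r.2.2) p (0, 0, 1) := by
    funext p; rw [pt_eq hf]
  have h2 : (fun p : ℝ × ℝ × ℝ => px f p.1 p.2.1 p.2.2)
      = fun p => fderiv ℝ (fun r : ℝ × ℝ × ℝ => f r.1 r.2.1 r.2.2) p (1, 0, 0) := by
    funext p; rw [px_eq hf]
  rw [h1, h2]
  exact fderiv_swap hf (x, y, t) (0, 0, 1) (1, 0, 0)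

theorem Sm_log (hf : Sm f) (h0 : ∀ x y t, f x y t ≠ 0) : Sm (WW f) := by
  apply contDiff_iff_contDiffAt.2
  intro p
  exact (Real.contDiffAt_log.2 (h0 p.1 p.2.1 p.2.2)).comp p hf.contDiffAt

theorem hasDerivAt_of_eq {h : ℝ → ℝ} {v w : ℝ} {x : ℝ}
    (H : HasDerivAt h v x) (hvw : w = v) : HasDerivAt h w x := hvw ▸ H

theorem px_ext {v : ℝ} (hfg : ∀ a b s, f a b s = g a b s)
    (H : HasDerivAt (fun s => g s y t) v x) : px f x y t = v :=
  (H.congr_of_eventuallyEq (Filter.Eventually.of_forall fun s => hfg s y t)).deriv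

theorem py_ext {v : ℝ} (hfg : ∀ a b s, f a b s = g a b s)
    (H : HasDerivAt (fun s => g x s t) v y) : py f x y t = v :=
  (H.congr_of_eventuallyEq (Filter.Eventually.of_forall fun s => hfg x s t)).deriv

theorem pt_ext {v : ℝ} (hfg : ∀ a b s, f a b s = g a b s)
    (H : HasDerivAt (fun s => g x y s) v t) : pt f x y t = v :=
  (H.congr_of_eventuallyEq (Filter.Eventually.of_forall fun s => hfg x y s)).deriv

end KPaux

open KPaux in
/-- **Tau functions of the Hirota bilinear equation give KP solutions.**
If `τ : ℝ³ → ℝ` is smooth and nowhere vanishing, `c, d ∈ ℝ`, and `τ` satisfies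
the Hirota bilinear equation at every point, then `u = 2 ∂²ₓ log τ + c`
satisfies the Kadomtsev–Petviashvili equation
`∂ₓ(4u_t − 6uu_x − u_{xxx}) = 3u_{yy}` at every point. -/
theorem hirota_implies_KP
    (τ : ℝ → ℝ → ℝ → ℝ) (c d : ℝ)
    (hτ : ContDiff ℝ (⊤ : ℕ∞) (fun p : ℝ × ℝ × ℝ => τ p.1 p.2.1 p.2.2))
    (hne : ∀ x y t, τ x y t ≠ 0)
    (hHirota : ∀ x y t,
      (px (px (px (px τ))) x y t * τ x y t
          - 4 * px (px (px τ)) x y t * px τ x y t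
          + 3 * (px (px τ) x y t) ^ 2)
        + 4 * (px τ x y t * pt τ x y t - τ x y t * pt (px τ) x y t)
        + 6 * c * (px (px τ) x y t * τ x y t - (px τ x y t) ^ 2)
        + 3 * (τ x y t * py (py τ) x y t - (py τ x y t) ^ 2)
        + 8 * d * (τ x y t) ^ 2 = 0) :
    ∀ x y t,
      px (fun a b s =>
            4 * pt (uKP τ c) a b s
              - 6 * uKP τ c a b s * px (uKP τ c) a b s
              - px (px (px (uKP τ c))) a b s) x y t
        = 3 * py (py (uKP τ c)) x y t := by
  have hτ' : Sm τ := hτ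
  -- smoothness of derivatives of τ
  have hT1 : Sm (px τ) := Sm_px hτ'
  have hT2 : Sm (px (px τ)) := Sm_px hT1
  have hT3 : Sm (px (px (px τ))) := Sm_px hT2
  have hTy : Sm (py τ) := Sm_py hτ'
  -- smoothness of derivatives of W = log τ and V = ∂²ₓ log τ
  have hSW : Sm (WW τ) := Sm_log hτ' hne
  have hW1 : Sm (px (WW τ)) := Sm_px hSW
  have hSV : Sm (VV τ) := Sm_px hW1
  have hV1 : Sm (px (VV τ)) := Sm_px hSV
  have hV2 : Sm (px (px (VV τ))) := Sm_px hV1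
  have hV3 : Sm (px (px (px (VV τ)))) := Sm_px hV2
  have hVt : Sm (pt (VV τ)) := Sm_pt hSV
  have hVy : Sm (py (VV τ)) := Sm_py hSV
  have hWt1 : Sm (pt (px (WW τ))) := Sm_pt hW1
  have hWt2 : Sm (px (pt (px (WW τ)))) := Sm_px hWt1
  have hWy : Sm (py (WW τ)) := Sm_py hSW
  have hWyy : Sm (py (py (WW τ))) := Sm_py hWy
  have hWyyx : Sm (px (py (py (WW τ)))) := Sm_px hWyy
  have hWxy : Sm (py (px (WW τ))) := Sm_py hW1
  have hWxyx : Sm (px (py (px (WW τ)))) := Sm_px hWxy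
  -- first derivatives of W in terms of τ
  have e1 : ∀ x y t, px (WW τ) x y t = px τ x y t / τ x y t := fun x y t =>
    px_ext (g := fun a b s => Real.log (τ a b s)) (fun _ _ _ => rfl)
      ((pxHas hτ').log (hne x y t))
  have ey1 : ∀ x y t, py (WW τ) x y t = py τ x y t / τ x y t := fun x y t =>
    py_ext (g := fun a b s => Real.log (τ a b s)) (fun _ _ _ => rfl)
      ((pyHas hτ').log (hne x y t))
  -- second derivatives
  have e2 : ∀ x y t, VV τ x y t
      = (px (px τ) x y t * τ x y t - (px τ x y t) ^ 2) / (τ x y t) ^ 2 := fun x y t =>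
    px_ext (g := fun a b s => px τ a b s / τ a b s) e1
      (hasDerivAt_of_eq ((pxHas hT1).div (pxHas hτ') (hne x y t)) (by ring))
  have et2 : ∀ x y t, pt (px (WW τ)) x y t
      = (pt (px τ) x y t * τ x y t - px τ x y t * pt τ x y t) / (τ x y t) ^ 2 := fun x y t =>
    pt_ext (g := fun a b s => px τ a b s / τ a b s) e1
      (hasDerivAt_of_eq ((ptHas hT1).div (ptHas hτ') (hne x y t)) (by ring))
  have ey2 : ∀ x y t, py (py (WW τ)) x y t
      = (py (py τ) x y t * τ x y t - (py τ x y t) ^ 2) / (τ x y t) ^ 2 := fun x y t =>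
    py_ext (g := fun a b s => py τ a b s / τ a b s) ey1
      (hasDerivAt_of_eq ((pyHas hTy).div (pyHas hτ') (hne x y t)) (by ring))
  -- third x-derivative of W
  have e3 : ∀ x y t, px (VV τ) x y t
      = (px (px (px τ)) x y t * (τ x y t) ^ 2
          - 3 * (px (px τ) x y t * px τ x y t * τ x y t)
          + 2 * (px τ x y t) ^ 3) / (τ x y t) ^ 3 := fun x y t =>
    px_ext (g := fun a b s => (px (px τ) a b s * τ a b s - (px τ a b s) ^ 2) / (τ a b s) ^ 2) e2
      (hasDerivAt_of_eq
        ((((pxHas hT2).mul (pxHas hτ')).sub ((pxHas hT1).pow 2)).div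
          ((pxHas hτ').pow 2) (pow_ne_zero 2 (hne x y t)))
        (by simp only [Pi.mul_apply, Pi.sub_apply, Pi.pow_apply, Pi.add_apply]; field_simp [hne x y t]; ring))
  -- fourth x-derivative of W
  have e4 : ∀ x y t, px (px (VV τ)) x y t
      = (px (px (px (px τ))) x y t * (τ x y t) ^ 3
          - 4 * px (px (px τ)) x y t * px τ x y t * (τ x y t) ^ 2
          - 3 * (px (px τ) x y t) ^ 2 * (τ x y t) ^ 2
          + 12 * px (px τ) x y t * (px τ x y t) ^ 2 * τ x y t
          - 6 * (px τ x y t) ^ 4) / (τ x y t) ^ 4 := fun x y t =>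
    px_ext (g := fun a b s => (px (px (px τ)) a b s * (τ a b s) ^ 2
          - 3 * (px (px τ) a b s * px τ a b s * τ a b s)
          + 2 * (px τ a b s) ^ 3) / (τ a b s) ^ 3) e3
      (hasDerivAt_of_eq
        (((((pxHas hT3).mul ((pxHas hτ').pow 2)).sub
            ((((pxHas hT2).mul (pxHas hT1)).mul (pxHas hτ')).const_mul 3)).add
            (((pxHas hT1).pow 3).const_mul 2)).div
          ((pxHas hτ').pow 3) (pow_ne_zero 3 (hne x y t)))
        (by simp only [Pi.mul_apply, Pi.sub_apply, Pi.pow_apply, Pi.add_apply]; field_simp [hne x y t]; ring))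
  -- the Hirota equation in terms of W
  have H0 : ∀ x y t, px (px (VV τ)) x y t
      = 4 * pt (px (WW τ)) x y t - 6 * (VV τ x y t) ^ 2 - 6 * c * VV τ x y t
        - 3 * py (py (WW τ)) x y t - 8 * d := by
    intro x y t
    rw [e4 x y t, et2 x y t, e2 x y t, ey2 x y t]
    field_simp [hne x y t]
    linear_combination (τ x y t) ^ 2 * hHirota x y t
  -- differentiate once in x
  have B1 : ∀ x y t, px (px (px (VV τ))) x y t
      = 4 * px (pt (px (WW τ))) x y t - 12 * (VV τ x y t * px (VV τ) x y t)
        - 6 * c * px (VV τ) x y t - 3 * px (py (py (WW τ))) x y t := by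
    intro x y t
    refine px_ext (g := fun a b s => 4 * pt (px (WW τ)) a b s - 6 * (VV τ a b s) ^ 2
        - 6 * c * VV τ a b s - 3 * py (py (WW τ)) a b s - 8 * d) H0
      ?_
    have H := (((((pxHas (x := x) (y := y) (t := t) hWt1).const_mul 4).sub (((pxHas (x := x) (y := y) (t := t) hSV).pow 2).const_mul 6)).sub
        ((pxHas (x := x) (y := y) (t := t) hSV).const_mul (6 * c))).sub ((pxHas (x := x) (y := y) (t := t) hWyy).const_mul 3)).sub_const (8 * d)
    exact hasDerivAt_of_eq H (by push_cast; ring)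
  -- differentiate twice in x
  have B2 : ∀ x y t, px (px (px (px (VV τ)))) x y t
      = 4 * px (px (pt (px (WW τ)))) x y t - 12 * (px (VV τ) x y t) ^ 2
        - 12 * (VV τ x y t * px (px (VV τ)) x y t) - 6 * c * px (px (VV τ)) x y t
        - 3 * px (px (py (py (WW τ)))) x y t := by
    intro x y t
    refine px_ext (g := fun a b s => 4 * px (pt (px (WW τ))) a b s
        - 12 * (VV τ a b s * px (VV τ) a b s)
        - 6 * c * px (VV τ) a b s - 3 * px (py (py (WW τ))) a b s) B1
      ?_
    have H := ((((pxHas (x := x) (y := y) (t := t) hWt2).const_mul 4).sub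
        (((pxHas (x := x) (y := y) (t := t) hSV).mul (pxHas (x := x) (y := y) (t := t) hV1)).const_mul 12)).sub
        ((pxHas (x := x) (y := y) (t := t) hV1).const_mul (6 * c))).sub ((pxHas (x := x) (y := y) (t := t) hWyyx).const_mul 3)
    exact hasDerivAt_of_eq H (by ring)
  -- uKP in terms of V
  have hu : ∀ a b s, uKP τ c a b s = 2 * VV τ a b s + c := fun _ _ _ => rfl
  have c1 : ∀ x y t, pt (uKP τ c) x y t = 2 * pt (VV τ) x y t := fun x y t =>
    pt_ext (g := fun a b s => 2 * VV τ a b s + c) hu (((ptHas hSV).const_mul 2).add_const c)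
  have c2 : ∀ x y t, px (uKP τ c) x y t = 2 * px (VV τ) x y t := fun x y t =>
    px_ext (g := fun a b s => 2 * VV τ a b s + c) hu (((pxHas hSV).const_mul 2).add_const c)
  have c3 : ∀ x y t, px (px (uKP τ c)) x y t = 2 * px (px (VV τ)) x y t := fun x y t =>
    px_ext (g := fun a b s => 2 * px (VV τ) a b s) c2 ((pxHas hV1).const_mul 2)
  have c4 : ∀ x y t, px (px (px (uKP τ c))) x y t = 2 * px (px (px (VV τ))) x y t :=
    fun x y t =>
    px_ext (g := fun a b s => 2 * px (px (VV τ)) a b s) c3 ((pxHas hV2).const_mul 2)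
  have c5 : ∀ x y t, py (uKP τ c) x y t = 2 * py (VV τ) x y t := fun x y t =>
    py_ext (g := fun a b s => 2 * VV τ a b s + c) hu (((pyHas hSV).const_mul 2).add_const c)
  have c6 : ∀ x y t, py (py (uKP τ c)) x y t = 2 * py (py (VV τ)) x y t := fun x y t =>
    py_ext (g := fun a b s => 2 * py (VV τ) a b s) c5 ((pyHas hVy).const_mul 2)
  -- commutation facts
  have m1 : ∀ x y t, px (pt (VV τ)) x y t = px (px (pt (px (WW τ)))) x y t := fun x y t =>
    px_ext (g := fun a b s => px (pt (px (WW τ))) a b s)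
      (fun a b s => (comm_xt hW1).symm) (pxHas hWt2)
  have sA : ∀ a b s, py (VV τ) a b s = px (py (px (WW τ))) a b s :=
    fun a b s => (comm_xy hW1).symm
  have sB : ∀ x y t, py (py (VV τ)) x y t = py (px (py (px (WW τ)))) x y t := fun x y t =>
    py_ext (g := fun a b s => px (py (px (WW τ))) a b s) sA (pyHas hWxyx)
  have sC : ∀ a b s, py (px (WW τ)) a b s = px (py (WW τ)) a b s :=
    fun a b s => (comm_xy hSW).symm
  have sD : ∀ x y t, py (py (px (WW τ))) x y t = py (px (py (WW τ))) x y t := fun x y t =>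
    py_ext (g := fun a b s => px (py (WW τ)) a b s) sC (pyHas (Sm_px hWy))
  have sE : ∀ a b s, py (py (px (WW τ))) a b s = px (py (py (WW τ))) a b s :=
    fun a b s => (sD a b s).trans (comm_xy hWy).symm
  have sG : ∀ x y t, py (px (py (px (WW τ)))) x y t = px (py (py (px (WW τ)))) x y t :=
    fun x y t => (comm_xy hWxy).symm
  have sH : ∀ x y t, px (py (py (px (WW τ)))) x y t = px (px (py (py (WW τ)))) x y t :=
    fun x y t =>
    px_ext (g := fun a b s => px (py (py (WW τ))) a b s) sE (pxHas hWyyx)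
  have m2 : ∀ x y t, py (py (VV τ)) x y t = px (px (py (py (WW τ)))) x y t :=
    fun x y t => ((sB x y t).trans (sG x y t)).trans (sH x y t)
  -- expand the KP left-hand side
  have c7 : ∀ x y t,
      px (fun a b s =>
            4 * pt (uKP τ c) a b s
              - 6 * uKP τ c a b s * px (uKP τ c) a b s
              - px (px (px (uKP τ c))) a b s) x y t
        = 8 * px (pt (VV τ)) x y t - 24 * (px (VV τ) x y t) ^ 2
          - 24 * (VV τ x y t * px (px (VV τ)) x y t) - 12 * c * px (px (VV τ)) x y t
          - 2 * px (px (px (px (VV τ)))) x y t := by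
    intro x y t
    refine px_ext (g := fun a b s => 4 * (2 * pt (VV τ) a b s)
        - 6 * (2 * VV τ a b s + c) * (2 * px (VV τ) a b s)
        - 2 * px (px (px (VV τ))) a b s)
      (fun a b s => by rw [c1 a b s, hu a b s, c2 a b s, c4 a b s])
      ?_
    have H := ((((pxHas (x := x) (y := y) (t := t) hVt).const_mul 2).const_mul 4).sub
        (((((pxHas (x := x) (y := y) (t := t) hSV).const_mul 2).add_const c).const_mul 6).mul
          ((pxHas (x := x) (y := y) (t := t) hV1).const_mul 2))).sub ((pxHas (x := x) (y := y) (t := t) hV3).const_mul 2)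
    exact hasDerivAt_of_eq H (by ring)
  -- conclude
  intro x y t
  rw [c7 x y t, c6 x y t, m1 x y t, m2 x y t]
  linear_combination (-2 : ℝ) * B2 x y t
end

section
/- Let κ_1, ..., κ_6 be positive real numbers with κ_1 < κ_3, and define the polynomial M(x_3, x_4, x_5) = κ_2κ_4κ_5(κ_1 − κ_3) x_3 x_5 + κ_1κ_2κ_4κ_5 x_4 x_5 + κ_4κ_5κ_6(κ_1 + κ_2) x_5² + κ_1κ_2κ_3κ_4 x_3 + κ_1κ_2κ_3κ_5 x_4 + κ_1κ_5κ_6(κ_3 + κ_2) x_5 + κ_1κ_2κ_3κ_6. Then there exist x_3, x_4, x_5 > 0 with M(x_3, x_4, x_5) < 0. -/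
/-!
Fix `x₄ = 1`. Since `κ₁ < κ₃`, the coefficient `κ₂κ₄(κ₅(κ₁ - κ₃) x₅ + κ₁κ₃)` of `x₃` in `M` is
negative once `x₅` is large, and for such `x₅` the polynomial `M`, affine in `x₃` with negative
slope, becomes negative once `x₃` is large.
-/

theorem histidine_kinase_jacobian_takes_negative_values_general
    (κ1 κ2 κ3 κ4 κ5 κ6 : ℝ)
    (h2 : 0 < κ2)
    (h4 : 0 < κ4) (h5 : 0 < κ5)
    (h13 : κ1 < κ3) :
    ∃ x3 x4 x5 : ℝ, 0 < x3 ∧ 0 < x4 ∧ 0 < x5 ∧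
      κ2 * κ4 * κ5 * (κ1 - κ3) * x3 * x5
          + κ1 * κ2 * κ4 * κ5 * x4 * x5
          + κ4 * κ5 * κ6 * (κ1 + κ2) * x5 ^ 2
          + κ1 * κ2 * κ3 * κ4 * x3
          + κ1 * κ2 * κ3 * κ5 * x4
          + κ1 * κ5 * κ6 * (κ3 + κ2) * x5
          + κ1 * κ2 * κ3 * κ6 < 0 := by
  have hslope : 0 < κ2 * κ4 * κ5 * (κ3 - κ1) := by
    have := sub_pos.mpr h13
    positivity
  obtain ⟨x5, hx5, hx5_large⟩ := exists_pos_lt_mul hslope (κ1 * κ2 * κ3 * κ4)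
  set coeff := κ2 * κ4 * κ5 * (κ1 - κ3) * x5 + κ1 * κ2 * κ3 * κ4
  have hcoeff : 0 < -coeff := by linarith
  obtain ⟨x3, hx3, hx3_large⟩ := exists_pos_lt_mul hcoeff
    (κ1 * κ2 * κ4 * κ5 * x5 + κ4 * κ5 * κ6 * (κ1 + κ2) * x5 ^ 2 + κ1 * κ2 * κ3 * κ5
      + κ1 * κ5 * κ6 * (κ3 + κ2) * x5 + κ1 * κ2 * κ3 * κ6)
  refine ⟨x3, 1, x5, hx3, one_pos, hx5, ?_⟩
  linear_combination hx3_large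

/-- **Multistationarity regime of the hybrid histidine kinase network.**
If the rate constants satisfy `κ₁ < κ₃`, the Jacobian determinant polynomial
`M(x₃,x₄,x₅)` takes negative values on the positive orthant. -/
theorem histidine_kinase_jacobian_takes_negative_values
    (κ1 κ2 κ3 κ4 κ5 κ6 : ℝ)
    (h1 : 0 < κ1) (h2 : 0 < κ2) (h3 : 0 < κ3)
    (h4 : 0 < κ4) (h5 : 0 < κ5) (h6 : 0 < κ6)
    (h13 : κ1 < κ3) :
    ∃ x3 x4 x5 : ℝ, 0 < x3 ∧ 0 < x4 ∧ 0 < x5 ∧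
      κ2 * κ4 * κ5 * (κ1 - κ3) * x3 * x5
          + κ1 * κ2 * κ4 * κ5 * x4 * x5
          + κ4 * κ5 * κ6 * (κ1 + κ2) * x5 ^ 2
          + κ1 * κ2 * κ3 * κ4 * x3
          + κ1 * κ2 * κ3 * κ5 * x4
          + κ1 * κ5 * κ6 * (κ3 + κ2) * x5
          + κ1 * κ2 * κ3 * κ6 < 0 :=
  histidine_kinase_jacobian_takes_negative_values_general κ1 κ2 κ3 κ4 κ5 κ6 h2 h4 h5 h13
end

section
/- Let t ∈ ℝ³, let R be a real 3 × 3 matrix in the special orthogonal group SO(3) (i.e., RᵀR = I and det R = 1), and let E be the essential matrix E = [t]_× R, where [t]_× is the 3 × 3 skew-symmetric matrix satisfying [t]_× w = t × w (the cross product) for all w ∈ ℝ³. Then E satisfies the polynomial constraints det E = 0 and 2 E Eᵀ E − tr(E Eᵀ) E = 0 (the zero 3 × 3 matrix). -/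
open Matrix

lemma skew_eq (t : Fin 3 → ℝ) (T : Matrix (Fin 3) (Fin 3) ℝ)
    (hT : ∀ w : Fin 3 → ℝ, T.mulVec w = crossProduct t w) :
    T = !![0, -t 2, t 1; t 2, 0, -t 0; -t 1, t 0, 0] := by
  ext i j
  have h : T i j = crossProduct t (Pi.single j 1) i := by
    rw [← hT]
    simp [Matrix.mulVec_single]
  rw [h]
  fin_cases i <;> fin_cases j <;>
    simp [crossProduct, Pi.single_apply] <;> ring

set_option maxHeartbeats 1000000 in
lemma skew_cubic (a b c : ℝ) (S : Matrix (Fin 3) (Fin 3) ℝ)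
    (hS : S = !![0, -c, b; c, 0, -a; -b, a, 0]) :
    (2 : ℝ) • (S * Sᵀ * S) - (S * Sᵀ).trace • S = 0 := by
  subst hS
  have h1 : (!![0, -c, b; c, 0, -a; -b, a, 0] : Matrix (Fin 3) (Fin 3) ℝ)ᵀ
      = !![0, c, -b; -c, 0, a; b, -a, 0] := by
    ext i j; fin_cases i <;> fin_cases j <;> rfl
  rw [h1]
  ext i j
  fin_cases i <;> fin_cases j <;>
    simp [Matrix.mul_apply, Matrix.trace_fin_three, Fin.sum_univ_three,
      Matrix.smul_apply, Matrix.sub_apply, smul_eq_mul] <;>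
    ring

/-- **Algebraic characterization constraints of essential matrices.**
If `R ∈ SO(3)` and `E = [t]ₓ R`, where `[t]ₓ` is the skew-symmetric
cross-product matrix of `t ∈ ℝ³`, then `det E = 0` and
`2 E Eᵀ E − tr(E Eᵀ) E = 0`. -/
theorem essential_matrix_constraints
    (t : Fin 3 → ℝ) (R T : Matrix (Fin 3) (Fin 3) ℝ)
    (hR : Rᵀ * R = 1) (hdet : R.det = 1)
    (hT : ∀ w : Fin 3 → ℝ, T.mulVec w = crossProduct t w) :
    (T * R).det = 0 ∧
    (2 : ℝ) • (T * R * (T * R)ᵀ * (T * R)) - (T * R * (T * R)ᵀ).trace • (T * R) = 0 := by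
  have hTe := skew_eq t T hT
  have hRRt : R * Rᵀ = 1 := mul_eq_one_comm.mp hR
  have hdetT : T.det = 0 := by
    rw [hTe]
    simp [Matrix.det_fin_three]
    ring
  constructor
  · rw [Matrix.det_mul, hdetT, zero_mul]
  · have hEE : T * R * (T * R)ᵀ = T * Tᵀ := by
      rw [Matrix.transpose_mul]
      calc T * R * (Rᵀ * Tᵀ) = T * (R * Rᵀ) * Tᵀ := by
            simp only [Matrix.mul_assoc]
        _ = T * Tᵀ := by rw [hRRt, Matrix.mul_one]
    rw [hEE]
    have key := skew_cubic (t 0) (t 1) (t 2) T hTe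
    have h2 : ((2:ℝ) • (T * Tᵀ * T) - (T * Tᵀ).trace • T) * R = 0 := by
      rw [key, Matrix.zero_mul]
    rw [Matrix.sub_mul, Matrix.smul_mul, Matrix.smul_mul] at h2
    simp only [Matrix.mul_assoc] at h2 ⊢
    exact h2
end
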